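/- Let m₁,…,m₆ be the six lines of PG(5,3) represented respectively by the 2×6 matrices [[1,0,1,2,2,0],[0,1,1,0,2,2]], [[1,0,1,2,1,1],[0,1,1,0,2,0]], [[1,0,0,2,0,1],[0,1,1,1,2,1]], [[1,0,0,2,2,0],[0,1,1,1,2,2]], [[1,0,2,2,1,1],[0,1,0,2,2,0]], [[1,0,2,2,0,1],[0,1,0,2,2,1]] over GF(3). Then with respect to the Gram matrix M₆, every two not necessarily distinct of these six lines are opposite: mᵢ ∩ mⱼ^⊥ = 0 for all 1 ≤ i, j ≤ 6 (in particular each mᵢ is non-degenerate); i.e., {m₁,…,m₆} is a partial perp-system of W(M₆). -/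

import Mathlib

open Matrix

abbrev F3 := ZMod 3
abbrev V6 := Fin 6 → F3

/-- The line (2-dim subspace) represented by a 2×6 matrix: the span of its rows. -/
def lineOf (A : Matrix (Fin 2) (Fin 6) F3) : Submodule F3 V6 :=
  Submodule.span F3 (Set.range A)

/-- The perp of a subspace `W` with respect to a 6×6 Gram matrix `M`:
`{x | xᵀ M w = 0 for all w ∈ W}`. -/
def perp (M : Matrix (Fin 6) (Fin 6) F3) (W : Submodule F3 V6) : Submodule F3 V6 where
  carrier := {x | ∀ w ∈ W, x ⬝ᵥ M.mulVec w = 0}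
  add_mem' := by
    intro a b ha hb w hw
    simp only [Set.mem_setOf_eq] at *
    rw [add_dotProduct, ha w hw, hb w hw, add_zero]
  zero_mem' := by
    intro w hw
    exact zero_dotProduct _
  smul_mem' := by
    intro c x hx w hw
    simp only [Set.mem_setOf_eq] at *
    rw [smul_dotProduct, hx w hw, smul_zero]

/-- A 2×6 matrix built from three 2×2 blocks. -/
def blk3 (A B C : Matrix (Fin 2) (Fin 2) F3) : Matrix (Fin 2) (Fin 6) F3 :=
  Matrix.of fun i j => ![A, B, C] ⟨(j : ℕ) / 2, by omega⟩ i ⟨(j : ℕ) % 2, by omega⟩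

/-- A 6×6 matrix built from nine 2×2 blocks. -/
def blk33 (M : Matrix (Fin 3) (Fin 3) (Matrix (Fin 2) (Fin 2) F3)) :
    Matrix (Fin 6) (Fin 6) F3 :=
  Matrix.of fun i j =>
    M ⟨(i : ℕ) / 2, by omega⟩ ⟨(j : ℕ) / 2, by omega⟩ ⟨(i : ℕ) % 2, by omega⟩ ⟨(j : ℕ) % 2, by omega⟩

/-- The 2×2 block of a 6×6 matrix in block-position `(i, j)`. -/
def blkAt (M : Matrix (Fin 6) (Fin 6) F3) (i j : Fin 3) : Matrix (Fin 2) (Fin 2) F3 :=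
  Matrix.of fun a b => M ⟨2 * (i : ℕ) + (a : ℕ), by omega⟩ ⟨2 * (j : ℕ) + (b : ℕ), by omega⟩

/-- Two (not necessarily distinct) lines are opposite w.r.t. `M` if `ℓ ∩ m^⊥ = 0`. -/
def Opp (M : Matrix (Fin 6) (Fin 6) F3) (ℓ m : Submodule F3 V6) : Prop :=
  ℓ ⊓ perp M m = ⊥

/-- The six lines `m₁, …, m₆`. -/
def mline : Fin 6 → Submodule F3 V6 :=
  ![lineOf !![1, 0, 1, 2, 2, 0; 0, 1, 1, 0, 2, 2],
    lineOf !![1, 0, 1, 2, 1, 1; 0, 1, 1, 0, 2, 0],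
    lineOf !![1, 0, 0, 2, 0, 1; 0, 1, 1, 1, 2, 1],
    lineOf !![1, 0, 0, 2, 2, 0; 0, 1, 1, 1, 2, 2],
    lineOf !![1, 0, 2, 2, 1, 1; 0, 1, 0, 2, 2, 0],
    lineOf !![1, 0, 2, 2, 0, 1; 0, 1, 0, 2, 2, 1]]

/-- The Gram matrix `M₆`. -/
def M6 : Matrix (Fin 6) (Fin 6) F3 :=
  !![0, 0, 2, 2, 0, 0;
     0, 0, 0, 0, 1, 1;
     1, 0, 0, 0, 0, 0;
     1, 0, 0, 0, 1, 0;
     0, 2, 0, 2, 0, 0;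
     0, 2, 0, 0, 0, 0]

/-! A vector of `lineOf A` is `c ᵥ* A` for a coefficient vector `c`, and it is orthogonal to
`lineOf B` exactly when `c ᵥ* (A * M * Bᵀ) = 0`. So `lineOf A ⊓ (lineOf B)^⊥ = 0` as soon as the
2×2 matrix `A * M * Bᵀ` is nonsingular, and for the 36 pairs of lines this is a determinant
computation over `GF(3)`. -/

theorem vecMul_mul_mul_transpose_eq_zero {R m m' n : Type*} [CommRing R] [Fintype m]
    [Fintype n] (A : Matrix m n R) (M : Matrix n n R) (B : Matrix m' n R) (c : m → R)
    (h : ∀ j, (c ᵥ* A) ⬝ᵥ M *ᵥ B j = 0) : c ᵥ* (A * M * Bᵀ) = 0 := by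
  funext j
  rw [← vecMul_vecMul, ← vecMul_vecMul, vecMul_transpose, Pi.zero_apply, ← h j,
    dotProduct_mulVec]
  exact dotProduct_comm _ _

theorem lineOf_inf_perp_eq_bot_of_det_ne_zero (A B : Matrix (Fin 2) (Fin 6) F3)
    (M : Matrix (Fin 6) (Fin 6) F3) (h : (A * M * Bᵀ).det ≠ 0) :
    lineOf A ⊓ perp M (lineOf B) = ⊥ := by
  rw [eq_bot_iff]
  rintro x ⟨hxA, hxB⟩
  obtain ⟨c, rfl⟩ : ∃ c, c ᵥ* A = x := by
    simpa only [vecMul_eq_sum] using (Submodule.mem_span_range_iff_exists_fun F3).mp hxA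
  have hc : c ᵥ* (A * M * Bᵀ) = 0 ᵥ* (A * M * Bᵀ) := by
    rw [zero_vecMul]
    exact vecMul_mul_mul_transpose_eq_zero A M B c
      fun j => hxB (B j) (Submodule.subset_span ⟨j, rfl⟩)
  rw [vecMul_injective_iff_isUnit.mpr (isUnit_iff_isUnit_det _ |>.mpr h.isUnit) hc,
    zero_vecMul]
  exact zero_mem _

/-- The six lines `m₁, …, m₆` form a partial perp-system of `W(M₆)`:
every two not necessarily distinct of them are opposite with respect to `M₆`. -/
theorem stmt13 : ∀ i j : Fin 6, mline i ⊓ perp M6 (mline j) = ⊥ := by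
  intro i j
  fin_cases i <;> fin_cases j <;>
    exact lineOf_inf_perp_eq_bot_of_det_ne_zero _ _ _ (by decide)
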